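/- arXiv:cs/0410018 — 15 statements merged into one kernel-verified Lean document; each statement's English description precedes it below -/
import Mathlib

section
/- For any integral assignment A of n tasks with weights w_i ≥ 1 to m resources with positive delays, the cost C(A) = Σ_i L(A_i, A) is at least n²/D, where D = Σ_ℓ 1/d_ℓ. (The cost of any integral assignment of tasks with weights ≥ 1 is at least the optimal fractional cost for n unit-weight tasks.) -/
open Finset in
/-- Any integral assignment of `n` tasks with weights `≥ 1` to `m` resources with
positive delays has cost at least `n^2 / D`, where `D = ∑ ℓ, 1 / d ℓ`. -/
theorem integral_cost_lower_bound
    (n m : ℕ) (d : Fin m → ℝ) (hd : ∀ ℓ, 0 < d ℓ)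
    (w : Fin n → ℝ) (hw : ∀ i, 1 ≤ w i) (A : Fin n → Fin m) :
    (n : ℝ) ^ 2 / (∑ ℓ, 1 / d ℓ) ≤
      ∑ i : Fin n, d (A i) * ∑ j ∈ univ.filter (fun j => A j = A i), w j := by
  rcases Nat.eq_zero_or_pos m with hm | hm
  · have hn : n = 0 := by
      by_contra h
      exact absurd (A ⟨0, Nat.pos_of_ne_zero h⟩).isLt (by omega)
    subst hn
    simp
  set c : Fin m → ℝ := fun ℓ => ((univ.filter fun j => A j = ℓ).card : ℝ) with hc
  set S : Fin m → ℝ := fun ℓ => ∑ j ∈ univ.filter (fun j => A j = ℓ), w j with hS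
  have hcn : ∑ ℓ, c ℓ = (n : ℝ) := by
    rw [hc]
    push_cast
    rw [← Nat.cast_sum]
    norm_cast
    rw [← Finset.card_eq_sum_card_fiberwise (fun i _ => Finset.mem_univ (A i))]
    simp
  have hcS : ∀ ℓ, c ℓ ≤ S ℓ := by
    intro ℓ
    have : ∑ j ∈ univ.filter (fun j => A j = ℓ), (1:ℝ) ≤ S ℓ :=
      Finset.sum_le_sum fun j _ => hw j
    simpa using this
  have hc0 : ∀ ℓ, 0 ≤ c ℓ := fun ℓ => Nat.cast_nonneg _
  have hD : 0 < ∑ ℓ, 1 / d ℓ := by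
    apply Finset.sum_pos (fun ℓ _ => one_div_pos.mpr (hd ℓ))
    exact Finset.univ_nonempty_iff.mpr (Fin.pos_iff_nonempty.mp hm)
  have hrw : ∑ i : Fin n, d (A i) * ∑ j ∈ univ.filter (fun j => A j = A i), w j
      = ∑ ℓ, c ℓ * (d ℓ * S ℓ) := by
    rw [← Finset.sum_fiberwise univ A (fun i => d (A i) * ∑ j ∈ univ.filter (fun j => A j = A i), w j)]
    refine Finset.sum_congr rfl fun ℓ _ => ?_
    have : ∀ i ∈ univ.filter (fun i => A i = ℓ),
        d (A i) * ∑ j ∈ univ.filter (fun j => A j = A i), w j = d ℓ * S ℓ := by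
      intro i hi
      rw [Finset.mem_filter] at hi
      rw [hi.2, hS]
    rw [Finset.sum_congr rfl this, Finset.sum_const, nsmul_eq_mul]
  rw [hrw]
  have key : (∑ ℓ, c ℓ) ^ 2 ≤ (∑ ℓ, d ℓ * c ℓ ^ 2) * (∑ ℓ, 1 / d ℓ) := by
    have CS := Finset.sum_mul_sq_le_sq_mul_sq univ
      (fun ℓ => Real.sqrt (d ℓ) * c ℓ) (fun ℓ => Real.sqrt (1 / d ℓ))
    have h1 : ∀ ℓ : Fin m, (Real.sqrt (d ℓ) * c ℓ) * Real.sqrt (1 / d ℓ) = c ℓ := by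
      intro ℓ
      rw [one_div, Real.sqrt_inv, mul_assoc, mul_comm (c ℓ), ← mul_assoc,
        mul_inv_cancel₀ (Real.sqrt_ne_zero'.mpr (hd ℓ)), one_mul]
    have h2 : ∀ ℓ : Fin m, (Real.sqrt (d ℓ) * c ℓ) ^ 2 = d ℓ * c ℓ ^ 2 := by
      intro ℓ
      rw [mul_pow, Real.sq_sqrt (hd ℓ).le]
    have h3 : ∀ ℓ : Fin m, (Real.sqrt (1 / d ℓ)) ^ 2 = 1 / d ℓ := by
      intro ℓ
      exact Real.sq_sqrt (one_div_nonneg.mpr (hd ℓ).le)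
    simp only [h1, h2, h3] at CS
    exact CS
  rw [hcn] at key
  rw [div_le_iff₀ hD]
  refine key.trans (mul_le_mul_of_nonneg_right ?_ hD.le)
  refine Finset.sum_le_sum fun ℓ _ => ?_
  have : d ℓ * c ℓ ^ 2 = c ℓ * (d ℓ * c ℓ) := by ring
  rw [this]
  exact mul_le_mul_of_nonneg_left (mul_le_mul_of_nonneg_left (hcS ℓ) (hd ℓ).le) (hc0 ℓ)
end

section
/- Suppose n ≥ m tasks have weights in [1, w_max]. In any Nash assignment N, every resource j satisfies L(j,N) ≤ 4·w_max·(n/D), where D = Σ_ℓ 1/d_ℓ. -/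
open Finset

/-- The load of resource `ℓ` under assignment `A`. -/
noncomputable def resLoad {n m : ℕ} (d : Fin m → ℝ) (w : Fin n → ℝ)
    (A : Fin n → Fin m) (ℓ : Fin m) : ℝ :=
  d ℓ * ∑ i ∈ univ.filter (fun i => A i = ℓ), w i

/-- `A` is a Nash assignment: no task can strictly decrease its load by moving. -/
def IsNash {n m : ℕ} (d : Fin m → ℝ) (w : Fin n → ℝ) (A : Fin n → Fin m) : Prop :=
  ∀ (i : Fin n) (ℓ : Fin m), resLoad d w A (A i) ≤ resLoad d w A ℓ + w i * d ℓ

/-- If `n ≥ m` tasks have weights in `[1, wmax]`, then in any Nash assignment every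
resource `j` has load at most `4 * wmax * (n / D)` where `D = ∑ ℓ, 1 / d ℓ`. -/
theorem nash_load_upper_bound
    (n m : ℕ) (hnm : m ≤ n) (d : Fin m → ℝ) (hd : ∀ ℓ, 0 < d ℓ)
    (wmax : ℝ) (w : Fin n → ℝ) (hw : ∀ i, 1 ≤ w i ∧ w i ≤ wmax)
    (N : Fin n → Fin m) (hN : IsNash d w N) (j : Fin m) :
    resLoad d w N j ≤ 4 * wmax * ((n : ℝ) / (∑ ℓ, 1 / d ℓ)) := by
  have hm : 0 < m := j.pos
  have hn : 0 < n := lt_of_lt_of_le hm hnm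
  have hwmax : 1 ≤ wmax := le_trans (hw ⟨0, hn⟩).1 (hw ⟨0, hn⟩).2
  have hD : 0 < ∑ ℓ, 1 / d ℓ := by
    apply Finset.sum_pos (fun ℓ _ => one_div_pos.mpr (hd ℓ)) ⟨j, mem_univ j⟩
  -- total fiberwise sum
  have hfib : ∑ ℓ, ∑ i ∈ univ.filter (fun i => N i = ℓ), w i = ∑ i, w i := by
    rw [← Finset.sum_fiberwise univ N w]
  have hWle : ∑ i, w i ≤ n * wmax := by
    calc ∑ i, w i ≤ ∑ _i : Fin n, wmax := Finset.sum_le_sum (fun i _ => (hw i).2)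
    _ = n * wmax := by simp [mul_comm]
  have hload_nonneg : ∀ ℓ, 0 ≤ resLoad d w N ℓ := by
    intro ℓ
    apply mul_nonneg (hd ℓ).le
    exact Finset.sum_nonneg (fun i _ => le_trans zero_le_one (hw i).1)
  by_cases hex : ∃ i, N i = j
  · obtain ⟨i, hi⟩ := hex
    have key : ∀ ℓ, resLoad d w N j * (1 / d ℓ) ≤ resLoad d w N ℓ * (1 / d ℓ) + wmax := by
      intro ℓ
      have h1 : resLoad d w N j ≤ resLoad d w N ℓ + wmax * d ℓ := by
        have := hN i ℓ
        rw [hi] at this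
        have : resLoad d w N j ≤ resLoad d w N ℓ + w i * d ℓ := this
        nlinarith [(hw i).2, hd ℓ]
      have hdl := hd ℓ
      simp only [one_div]
      have h2 := mul_le_mul_of_nonneg_right h1 (inv_nonneg.mpr hdl.le)
      have h3 : (resLoad d w N ℓ + wmax * d ℓ) * (d ℓ)⁻¹ =
          resLoad d w N ℓ * (d ℓ)⁻¹ + wmax := by field_simp
      linarith
    have hsum : resLoad d w N j * (∑ ℓ, 1 / d ℓ) ≤ (∑ i, w i) + m * wmax := by
      rw [Finset.mul_sum]
      calc ∑ ℓ, resLoad d w N j * (1 / d ℓ)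
          ≤ ∑ ℓ, (resLoad d w N ℓ * (1 / d ℓ) + wmax) :=
            Finset.sum_le_sum (fun ℓ _ => key ℓ)
        _ = (∑ ℓ, resLoad d w N ℓ * (1 / d ℓ)) + m * wmax := by
            rw [Finset.sum_add_distrib]; simp [mul_comm]
        _ = (∑ i, w i) + m * wmax := by
            congr 1
            rw [← hfib]
            apply Finset.sum_congr rfl
            intro ℓ _
            have : d ℓ ≠ 0 := (hd ℓ).ne'
            unfold resLoad
            field_simp
    have h2 : resLoad d w N j * (∑ ℓ, 1 / d ℓ) ≤ 2 * n * wmax := by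
      have hmn : (m : ℝ) ≤ n := by exact_mod_cast hnm
      have : (m : ℝ) * wmax ≤ n * wmax := by nlinarith
      nlinarith
    rw [← le_div_iff₀ hD] at h2
    calc resLoad d w N j ≤ 2 * n * wmax / (∑ ℓ, 1 / d ℓ) := h2
      _ ≤ 4 * wmax * ((n : ℝ) / (∑ ℓ, 1 / d ℓ)) := by
          have hnD : (0:ℝ) ≤ (n:ℝ) / (∑ ℓ, 1 / d ℓ) := by positivity
          have heq : 2 * (n:ℝ) * wmax / (∑ ℓ, 1 / d ℓ) =
              2 * wmax * ((n:ℝ) / (∑ ℓ, 1 / d ℓ)) := by ring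
          rw [heq]
          nlinarith
  · have : univ.filter (fun i => N i = j) = ∅ := by
      rw [Finset.filter_eq_empty_iff]
      intro i _
      exact fun h => hex ⟨i, h⟩
    unfold resLoad
    rw [this]
    simp only [Finset.sum_empty, mul_zero]
    positivity
end

section
/- Suppose n ≥ m tasks have weights in [1, w_max] and are assigned to m resources with positive delays. Then the cost of any Nash assignment is at most 4·w_max times the cost of any assignment: max_{N Nash} C(N) ≤ 4·w_max · min_{A} C(A). -/
open Finset

/-- The social cost of assignment `A`: sum of the loads of the tasks. -/
noncomputable def socialCost {n m : ℕ} (d : Fin m → ℝ) (w : Fin n → ℝ)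
    (A : Fin n → Fin m) : ℝ :=
  ∑ i : Fin n, resLoad d w A (A i)

/-!
Test the Nash assignment `N` against the deviation of every task `i` to `A i`: summing the
Nash inequalities gives `C(N) ≤ B + C(A)`, where `B = ∑ᵢ L(A i, N) = ∑_ℓ k_A(ℓ) d_ℓ S_N(ℓ)`
with `k_A(ℓ)` the number and `S_N(ℓ)` the total weight of tasks on `ℓ`. By Cauchy–Schwarz,
`B² ≤ (∑_ℓ d_ℓ k_A(ℓ)²) (∑_ℓ d_ℓ S_N(ℓ)²)`; since weights are at least `1` the first factor is
at most `C(A)`, and since they are at most `w_max` the second is at most `w_max C(N)`.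
So `C(N) ≤ C(A) + √(w_max C(A) C(N))`, and AM–GM gives `C(N) ≤ (w_max + 2) C(A) ≤ 4 w_max C(A)`.
-/

theorem sum_comp_eq_sum_card_fiber_nsmul {ι κ M : Type*} [Fintype ι] [Fintype κ]
    [DecidableEq κ] [AddCommMonoid M] (A : ι → κ) (f : κ → M) :
    ∑ i, f (A i) = ∑ ℓ, #{i | A i = ℓ} • f ℓ := by
  rw [← Finset.sum_fiberwise_of_maps_to' (fun i _ => Finset.mem_univ (A i)) f]
  simp_rw [Finset.sum_const]

section Scheduling

variable {n m : ℕ} (d : Fin m → ℝ) (w : Fin n → ℝ)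

def fiberCard (A : Fin n → Fin m) (ℓ : Fin m) : ℝ := #{i | A i = ℓ}

noncomputable def resWeight (A : Fin n → Fin m) (ℓ : Fin m) : ℝ :=
  ∑ i ∈ univ.filter (fun i => A i = ℓ), w i

noncomputable def crossCost (N A : Fin n → Fin m) : ℝ :=
  ∑ i, resLoad d w N (A i)

theorem resLoad_eq_mul_resWeight (A : Fin n → Fin m) (ℓ : Fin m) :
    resLoad d w A ℓ = d ℓ * resWeight w A ℓ := rfl

theorem sum_comp_eq_sum_fiberCard_mul (A : Fin n → Fin m) (f : Fin m → ℝ) :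
    ∑ i, f (A i) = ∑ ℓ, fiberCard A ℓ * f ℓ := by
  simp only [sum_comp_eq_sum_card_fiber_nsmul A f, nsmul_eq_mul, fiberCard]

theorem socialCost_eq_sum_fiberCard_mul (A : Fin n → Fin m) :
    socialCost d w A = ∑ ℓ, fiberCard A ℓ * (d ℓ * resWeight w A ℓ) :=
  sum_comp_eq_sum_fiberCard_mul A _

theorem crossCost_eq_sum_fiberCard_mul (N A : Fin n → Fin m) :
    crossCost d w N A = ∑ ℓ, fiberCard A ℓ * (d ℓ * resWeight w N ℓ) :=
  sum_comp_eq_sum_fiberCard_mul A _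

variable {d w}

theorem resWeight_nonneg (hw : ∀ i, 0 ≤ w i) (A : Fin n → Fin m) (ℓ : Fin m) :
    0 ≤ resWeight w A ℓ :=
  Finset.sum_nonneg fun i _ => hw i

theorem fiberCard_le_resWeight (hw : ∀ i, 1 ≤ w i) (A : Fin n → Fin m) (ℓ : Fin m) :
    fiberCard A ℓ ≤ resWeight w A ℓ := by
  simpa [fiberCard, resWeight] using Finset.card_nsmul_le_sum _ w 1 fun i _ => hw i

theorem resWeight_le_mul_fiberCard {wmax : ℝ} (hw : ∀ i, w i ≤ wmax) (A : Fin n → Fin m)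
    (ℓ : Fin m) : resWeight w A ℓ ≤ wmax * fiberCard A ℓ := by
  simpa [fiberCard, resWeight, mul_comm] using Finset.sum_le_card_nsmul _ w wmax fun i _ => hw i

theorem weight_le_resWeight (hw : ∀ i, 0 ≤ w i) (A : Fin n → Fin m) (i : Fin n) :
    w i ≤ resWeight w A (A i) :=
  Finset.single_le_sum (fun j _ => hw j) (by simp)

theorem socialCost_nonneg (hd : ∀ ℓ, 0 ≤ d ℓ) (hw : ∀ i, 0 ≤ w i) (A : Fin n → Fin m) :
    0 ≤ socialCost d w A :=
  Finset.sum_nonneg fun _ _ => mul_nonneg (hd _) (resWeight_nonneg hw A _)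

theorem IsNash.socialCost_le_crossCost_add {N : Fin n → Fin m} (hN : IsNash d w N)
    (hd : ∀ ℓ, 0 ≤ d ℓ) (hw : ∀ i, 0 ≤ w i) (A : Fin n → Fin m) :
    socialCost d w N ≤ crossCost d w N A + socialCost d w A := by
  have hdev (i : Fin n) : resLoad d w N (N i) ≤ resLoad d w N (A i) + resLoad d w A (A i) := by
    have hmove : w i * d (A i) ≤ resLoad d w A (A i) := by
      rw [resLoad_eq_mul_resWeight, mul_comm]
      exact mul_le_mul_of_nonneg_left (weight_le_resWeight hw A i) (hd _)
    linarith [hN i (A i)]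
  rw [crossCost, socialCost, socialCost, ← Finset.sum_add_distrib]
  exact Finset.sum_le_sum fun i _ => hdev i

theorem sum_mul_fiberCard_sq_le_socialCost (hd : ∀ ℓ, 0 ≤ d ℓ) (hw : ∀ i, 1 ≤ w i)
    (A : Fin n → Fin m) : ∑ ℓ, d ℓ * fiberCard A ℓ ^ 2 ≤ socialCost d w A := by
  rw [socialCost_eq_sum_fiberCard_mul]
  refine Finset.sum_le_sum fun ℓ _ => ?_
  have hk : 0 ≤ fiberCard A ℓ := Nat.cast_nonneg _
  have := mul_le_mul_of_nonneg_left (fiberCard_le_resWeight hw A ℓ) (mul_nonneg (hd ℓ) hk)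
  linarith

theorem sum_mul_resWeight_sq_le_socialCost (hd : ∀ ℓ, 0 ≤ d ℓ) (hw : ∀ i, 0 ≤ w i)
    {wmax : ℝ} (hwmax : ∀ i, w i ≤ wmax) (N : Fin n → Fin m) :
    ∑ ℓ, d ℓ * resWeight w N ℓ ^ 2 ≤ wmax * socialCost d w N := by
  rw [socialCost_eq_sum_fiberCard_mul, Finset.mul_sum]
  refine Finset.sum_le_sum fun ℓ _ => ?_
  have := mul_le_mul_of_nonneg_left (resWeight_le_mul_fiberCard hwmax N ℓ)
    (mul_nonneg (hd ℓ) (resWeight_nonneg hw N ℓ))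
  linarith

theorem crossCost_sq_le (hd : ∀ ℓ, 0 ≤ d ℓ) {wmax : ℝ} (hw : ∀ i, 1 ≤ w i ∧ w i ≤ wmax)
    (N A : Fin n → Fin m) :
    crossCost d w N A ^ 2 ≤ socialCost d w A * (wmax * socialCost d w N) := by
  have hw0 (i : Fin n) : 0 ≤ w i := zero_le_one.trans (hw i).1
  rw [crossCost_eq_sum_fiberCard_mul]
  calc (∑ ℓ, fiberCard A ℓ * (d ℓ * resWeight w N ℓ)) ^ 2
      ≤ (∑ ℓ, d ℓ * fiberCard A ℓ ^ 2) * ∑ ℓ, d ℓ * resWeight w N ℓ ^ 2 :=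
        sum_sq_le_sum_mul_sum_of_sq_le_mul _
          (fun ℓ _ => mul_nonneg (hd ℓ) (sq_nonneg _))
          (fun ℓ _ => mul_nonneg (hd ℓ) (sq_nonneg _)) (fun ℓ _ => le_of_eq (by ring))
    _ ≤ socialCost d w A * (wmax * socialCost d w N) :=
        mul_le_mul (sum_mul_fiberCard_sq_le_socialCost hd (fun i => (hw i).1) A)
          (sum_mul_resWeight_sq_le_socialCost hd hw0 (fun i => (hw i).2) N)
          (Finset.sum_nonneg fun ℓ _ => mul_nonneg (hd ℓ) (sq_nonneg _))
          (socialCost_nonneg hd hw0 A)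

end Scheduling

theorem le_mul_add_two_mul_of_le_add_of_sq_le {x a b c : ℝ} (hx : 0 ≤ x) (ha : 0 ≤ a)
    (hc : 0 ≤ c) (hxb : x ≤ b + a) (hb : b ^ 2 ≤ a * (c * x)) : x ≤ (c + 2) * a := by
  have hamgm : 2 * b ≤ x + c * a := by
    by_contra! h
    nlinarith [sq_nonneg (x - c * a), mul_self_lt_mul_self (by positivity) h]
  linarith

theorem coordination_ratio_bound_general
    (n m : ℕ) (d : Fin m → ℝ) (hd : ∀ ℓ, 0 < d ℓ)
    (wmax : ℝ) (w : Fin n → ℝ) (hw : ∀ i, 1 ≤ w i ∧ w i ≤ wmax)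
    (N : Fin n → Fin m) (hN : IsNash d w N) (A : Fin n → Fin m) :
    socialCost d w N ≤ 4 * wmax * socialCost d w A := by
  rcases isEmpty_or_nonempty (Fin n) with hn | ⟨⟨i⟩⟩
  · simp [socialCost]
  have hd0 (ℓ : Fin m) : 0 ≤ d ℓ := (hd ℓ).le
  have hw0 (i : Fin n) : 0 ≤ w i := zero_le_one.trans (hw i).1
  have hwmax : 1 ≤ wmax := (hw i).1.trans (hw i).2
  have hA := socialCost_nonneg hd0 hw0 A
  calc socialCost d w N ≤ (wmax + 2) * socialCost d w A :=
        le_mul_add_two_mul_of_le_add_of_sq_le (socialCost_nonneg hd0 hw0 N) hA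
          (by linarith) (hN.socialCost_le_crossCost_add hd0 hw0 A) (crossCost_sq_le hd0 hw N A)
    _ ≤ 4 * wmax * socialCost d w A := by nlinarith

/-- If `n ≥ m` tasks with weights in `[1, wmax]` are assigned to `m` resources with
positive delays, then the cost of any Nash assignment is at most `4 * wmax` times the
cost of any assignment. -/
theorem coordination_ratio_bound
    (n m : ℕ) (hnm : m ≤ n) (d : Fin m → ℝ) (hd : ∀ ℓ, 0 < d ℓ)
    (wmax : ℝ) (w : Fin n → ℝ) (hw : ∀ i, 1 ≤ w i ∧ w i ≤ wmax)
    (N : Fin n → Fin m) (hN : IsNash d w N) (A : Fin n → Fin m) :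
    socialCost d w N ≤ 4 * wmax * socialCost d w A :=
  coordination_ratio_bound_general n m d hd wmax w hw N hN A
end

section
/- In an instance with m identical unit-delay resources, in any Nash assignment every task i whose weight exceeds the average load L_avg = W/m (where W is the total weight) is the unique task on its resource. -/
open Finset

/-- Load of resource `ℓ` with identical unit delays: total weight assigned to `ℓ`. -/
noncomputable def uLoad {n m : ℕ} (w : Fin n → ℝ) (A : Fin n → Fin m) (ℓ : Fin m) : ℝ :=
  ∑ i ∈ univ.filter (fun i => A i = ℓ), w i

/-- In an instance with `m` identical unit-delay resources, in any Nash assignment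
every task whose weight exceeds the average load `W/m` is alone on its resource. -/
theorem heavy_task_alone
    (n m : ℕ) (hm : 0 < m) (w : Fin n → ℝ) (hw : ∀ i, 1 ≤ w i)
    (A : Fin n → Fin m)
    (hN : ∀ (i : Fin n) (ℓ : Fin m), uLoad w A (A i) ≤ uLoad w A ℓ + w i)
    (i : Fin n) (hi : (∑ j, w j) / m < w i) :
    ∀ j : Fin n, j ≠ i → A j ≠ A i := by
  intro j hji hA
  -- load of A i is at least w i + w j
  have hpair : w i + w j ≤ uLoad w A (A i) := by
    have hsub : ({i, j} : Finset (Fin n)) ⊆ univ.filter (fun k => A k = A i) := by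
      intro k hk
      simp only [mem_insert, mem_singleton] at hk
      rcases hk with rfl | rfl <;> simp [hA]
    have := Finset.sum_le_sum_of_subset_of_nonneg hsub
      (fun k _ _ => le_trans zero_le_one (hw k))
    calc w i + w j = ∑ k ∈ ({i, j} : Finset (Fin n)), w k := by
          rw [Finset.sum_pair (Ne.symm hji)]
      _ ≤ uLoad w A (A i) := this
  -- every resource has load ≥ w i
  have hall : ∀ ℓ : Fin m, w i ≤ uLoad w A ℓ := by
    intro ℓ
    have := hN j ℓ
    rw [hA] at this
    linarith [hpair]
  -- sum of loads equals total weight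
  have hsum : ∑ ℓ : Fin m, uLoad w A ℓ = ∑ k, w k := by
    unfold uLoad
    exact Finset.sum_fiberwise _ _ _
  have hW : (m : ℝ) * w i ≤ ∑ k, w k := by
    rw [← hsum]
    calc (m : ℝ) * w i = ∑ _ℓ : Fin m, w i := by simp [mul_comm]
      _ ≤ ∑ ℓ : Fin m, uLoad w A ℓ := Finset.sum_le_sum (fun ℓ _ => hall ℓ)
  have hmpos : (0 : ℝ) < m := by exact_mod_cast hm
  rw [div_lt_iff₀ hmpos] at hi
  linarith [hW]
end

section
/- For every n > 2, there is an instance with 2 identical unit-delay resources and n tasks with weights in [1, n²] such that every Nash assignment N satisfies C(N) ≥ (n/5)·min_A C(A). Concretely: with weights w_1 = w_2 = n² and w_3 = ... = w_n = 1, every Nash assignment has cost at least n³, while some assignment has cost at most 5n². -/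
open Finset

/-- Social cost with unit delays: sum of the tasks' loads. -/
noncomputable def uCost {n m : ℕ} (w : Fin n → ℝ) (A : Fin n → Fin m) : ℝ :=
  ∑ i : Fin n, uLoad w A (A i)

/-- For `n > 2` tasks on two identical unit-delay resources, with weights
`w₀ = w₁ = n²` and all other weights `1`, every Nash assignment has cost at least `n³`
while some assignment has cost at most `5 n²`; hence every Nash assignment costs at
least `n/5` times the optimal cost. -/
theorem nash_far_from_optimum
    (n : ℕ) (hn : 2 < n) (w : Fin n → ℝ)
    (hw0 : w ⟨0, by omega⟩ = (n : ℝ) ^ 2) (hw1 : w ⟨1, by omega⟩ = (n : ℝ) ^ 2)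
    (hwrest : ∀ i : Fin n, 1 < (i : ℕ) → w i = 1) :
    (∀ N : Fin n → Fin 2,
        (∀ (i : Fin n) (ℓ : Fin 2), uLoad w N (N i) ≤ uLoad w N ℓ + w i) →
        (n : ℝ) ^ 3 ≤ uCost w N) ∧
    (∃ A : Fin n → Fin 2, uCost w A ≤ 5 * (n : ℝ) ^ 2) ∧
    (∀ N : Fin n → Fin 2,
        (∀ (i : Fin n) (ℓ : Fin 2), uLoad w N (N i) ≤ uLoad w N ℓ + w i) →
        ∃ A : Fin n → Fin 2, (∀ B : Fin n → Fin 2, uCost w A ≤ uCost w B) ∧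
          ((n : ℝ) / 5) * uCost w A ≤ uCost w N) := by
  have hn3 : (3 : ℝ) ≤ (n : ℝ) := by exact_mod_cast hn
  set i0 : Fin n := ⟨0, by omega⟩ with hi0def
  set i1 : Fin n := ⟨1, by omega⟩ with hi1def
  have hne : i0 ≠ i1 := by simp [hi0def, hi1def, Fin.ext_iff]
  have hval : ∀ i : Fin n, ¬ 1 < (i : ℕ) → i = i0 ∨ i = i1 := by
    intro i h
    have hv : (i : ℕ) = 0 ∨ (i : ℕ) = 1 := by omega
    rcases hv with hv | hv
    · exact Or.inl (Fin.ext (by simpa [hi0def] using hv))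
    · exact Or.inr (Fin.ext (by simpa [hi1def] using hv))
  have hwpos : ∀ i, 0 < w i := by
    intro i
    by_cases h : 1 < (i : ℕ)
    · rw [hwrest i h]; norm_num
    · rcases hval i h with h' | h' <;> rw [h'] <;>
        first
        | (rw [hw0]; positivity)
        | (rw [hw1]; positivity)
  -- total weight
  have htot : ∑ i, w i = 2 * (n : ℝ) ^ 2 + ((n : ℝ) - 2) := by
    have h1 : ∑ i ∈ ({i0, i1} : Finset (Fin n)), (w i - 1) = ∑ i, (w i - 1) := by
      apply Finset.sum_subset (Finset.subset_univ _)
      intro x _ hx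
      simp only [Finset.mem_insert, Finset.mem_singleton] at hx
      push_neg at hx
      have hx1 : 1 < (x : ℕ) := by
        by_contra hc
        rcases hval x hc with h' | h' <;> simp [h'] at hx
      rw [hwrest x hx1]; ring
    rw [Finset.sum_pair hne, hw0, hw1] at h1
    have h2 : ∑ i, (w i - 1) = ∑ i, w i - n := by
      rw [Finset.sum_sub_distrib]
      simp [Finset.card_univ]
    rw [h2] at h1
    linarith
  -- loads on the two resources sum to the total weight
  have hsum : ∀ A : Fin n → Fin 2, uLoad w A 0 + uLoad w A 1 = ∑ i, w i := by
    intro A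
    have h2 : ∀ x : Fin 2, x = 1 ↔ ¬ x = 0 := by decide
    have := Finset.sum_filter_add_sum_filter_not univ (fun i => A i = 0) w
    rw [uLoad, uLoad, ← this]
    congr 1
    exact Finset.sum_congr (Finset.filter_congr (fun i _ => h2 (A i))) (fun _ _ => rfl)
  have hload_ge : ∀ (A : Fin n → Fin 2) (j : Fin n), w j ≤ uLoad w A (A j) := by
    intro A j
    exact Finset.single_le_sum (fun i _ => (hwpos i).le) (by simp)
  -- aux: every element of Fin 2 is one of two distinct values
  have hfin2 : ∀ a b c : Fin 2, a ≠ b → c = a ∨ c = b := by decide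
  -- key Nash property: the two big tasks are separated, and cost is large
  have key : ∀ N : Fin n → Fin 2,
      (∀ (i : Fin n) (ℓ : Fin 2), uLoad w N (N i) ≤ uLoad w N ℓ + w i) →
      (n : ℝ) ^ 3 ≤ uCost w N := by
    intro N hN
    have h01 : N i0 ≠ N i1 := by
      intro h
      have hbig : 2 * (n : ℝ) ^ 2 ≤ uLoad w N (N i0) := by
        have hsub : ({i0, i1} : Finset (Fin n)) ⊆ univ.filter (fun i => N i = N i0) := by
          intro x hx
          simp only [Finset.mem_insert, Finset.mem_singleton] at hx
          rcases hx with h' | h' <;> simp [h', h]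
        have := Finset.sum_le_sum_of_subset_of_nonneg hsub
          (fun i _ _ => (hwpos i).le)
        rw [Finset.sum_pair hne, hw0, hw1] at this
        rw [uLoad]
        linarith
      have hsplit := hsum N
      rw [htot] at hsplit
      rcases hfin2 0 1 (N i0) (by decide) with ha | ha
      · have hNash := hN i0 1
        rw [ha, hw0] at hNash
        rw [ha] at hbig
        nlinarith
      · have hNash := hN i0 0
        rw [ha, hw0] at hNash
        rw [ha] at hbig
        nlinarith
    have hload : ∀ ℓ : Fin 2, (n : ℝ) ^ 2 ≤ uLoad w N ℓ := by
      intro ℓ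
      rcases hfin2 (N i0) (N i1) ℓ h01 with h | h
      · rw [h, ← hw0]; exact hload_ge N i0
      · rw [h, ← hw1]; exact hload_ge N i1
    rw [uCost]
    calc (n : ℝ) ^ 3 = ∑ _i : Fin n, (n : ℝ) ^ 2 := by
          rw [Finset.sum_const, Finset.card_univ, Fintype.card_fin]
          ring
      _ ≤ ∑ i, uLoad w N (N i) := Finset.sum_le_sum (fun i _ => hload (N i))
  -- the good assignment
  set A : Fin n → Fin 2 := fun i => if (i : ℕ) ≤ 1 then 0 else 1 with hAdef
  have hf0 : univ.filter (fun i => A i = 0) = {i0, i1} := by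
    ext x
    simp only [Finset.mem_filter, Finset.mem_univ, true_and, Finset.mem_insert,
      Finset.mem_singleton, hAdef]
    by_cases h : (x : ℕ) ≤ 1
    · simp only [if_pos h]
      constructor
      · intro _; exact hval x (by omega) |>.imp id id
      · intro _; trivial
    · simp only [if_neg h]
      constructor
      · intro hc; exact absurd hc (by decide)
      · intro hc
        rcases hc with hc | hc <;> rw [hc] at h <;> simp [hi0def, hi1def] at h
  have hload0 : uLoad w A 0 = 2 * (n : ℝ) ^ 2 := by
    rw [uLoad, hf0, Finset.sum_pair hne, hw0, hw1]; ring
  have hload1 : uLoad w A 1 = (n : ℝ) - 2 := by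
    have := hsum A
    rw [htot, hload0] at this
    linarith
  have hsmall : ∀ j, A j = 1 → w j = 1 := by
    intro j hj
    apply hwrest
    by_contra hc
    simp only [hAdef, if_pos (by omega : (j : ℕ) ≤ 1)] at hj
    exact absurd hj (by decide)
  have hcard1 : ((univ.filter (fun i => A i = 1)).card : ℝ) = (n : ℝ) - 2 := by
    have h : ∑ j ∈ univ.filter (fun i => A i = 1), w j
        = ((univ.filter (fun i => A i = 1)).card : ℝ) := by
      rw [Finset.sum_congr rfl (fun j hj => hsmall j (Finset.mem_filter.mp hj).2)]
      simp
    rw [← h]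
    exact hload1 ▸ rfl
  have hcostA : uCost w A = 4 * (n : ℝ) ^ 2 + ((n : ℝ) - 2) ^ 2 := by
    rw [uCost, ← Finset.sum_filter_add_sum_filter_not univ (fun i => A i = 0)
      (fun i => uLoad w A (A i))]
    have e1 : ∑ i ∈ univ.filter (fun i => A i = 0), uLoad w A (A i)
        = 4 * (n : ℝ) ^ 2 := by
      rw [Finset.sum_congr rfl (fun i hi => by
        rw [(Finset.mem_filter.mp hi).2, hload0])]
      rw [hf0, Finset.sum_pair hne]; ring
    have hflt : univ.filter (fun i => ¬ A i = 0) = univ.filter (fun i => A i = 1) := by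
      apply Finset.filter_congr
      intro i _
      have : ∀ x : Fin 2, ¬ x = 0 ↔ x = 1 := by decide
      exact this (A i)
    have e2 : ∑ i ∈ univ.filter (fun i => ¬ A i = 0), uLoad w A (A i)
        = ((n : ℝ) - 2) ^ 2 := by
      rw [hflt, Finset.sum_congr rfl (fun i hi => by
        rw [(Finset.mem_filter.mp hi).2, hload1])]
      rw [Finset.sum_const, nsmul_eq_mul, hcard1]; ring
    rw [e1, e2]
  have hA5 : uCost w A ≤ 5 * (n : ℝ) ^ 2 := by
    rw [hcostA]; nlinarith
  refine ⟨key, ⟨A, hA5⟩, ?_⟩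
  intro N hN
  obtain ⟨Amin, hAmin⟩ := Finite.exists_min (fun B : Fin n → Fin 2 => uCost w B)
  refine ⟨Amin, hAmin, ?_⟩
  have h1 : uCost w Amin ≤ 5 * (n : ℝ) ^ 2 := le_trans (hAmin A) hA5
  have h2 : (n : ℝ) ^ 3 ≤ uCost w N := key N hN
  have h3 : (0 : ℝ) ≤ uCost w Amin := by
    rw [uCost]
    apply Finset.sum_nonneg
    intro i _
    rw [uLoad]
    exact Finset.sum_nonneg (fun j _ => (hwpos j).le)
  nlinarith
end

section
/- In any instance with identical unit-delay resources where every task weight satisfies w_i ≤ L_avg = W/m, every resource in a Nash assignment has load at least L_avg/2. -/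
open Finset

lemma uLoad_nonneg {n m : ℕ} (w : Fin n → ℝ) (hw : ∀ i, 0 ≤ w i) (A : Fin n → Fin m)
    (ℓ : Fin m) : 0 ≤ uLoad w A ℓ :=
  Finset.sum_nonneg fun i _ => hw i

lemma uLoad_sum {n m : ℕ} (w : Fin n → ℝ) (A : Fin n → Fin m) :
    ∑ ℓ, uLoad w A ℓ = ∑ i, w i := by
  classical
  unfold uLoad
  rw [← Finset.sum_fiberwise univ A w]

/-- With identical unit-delay resources and all task weights at most the average load
`L_avg = W/m`, every resource in a Nash assignment has load at least `L_avg / 2`. -/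
theorem nash_load_at_least_half_average
    (n m : ℕ) (hm : 0 < m) (w : Fin n → ℝ) (hw : ∀ i, 0 ≤ w i)
    (hwsmall : ∀ i, w i ≤ (∑ j, w j) / m)
    (A : Fin n → Fin m)
    (hN : ∀ (i : Fin n) (ℓ : Fin m), uLoad w A (A i) ≤ uLoad w A ℓ + w i) :
    ∀ ℓ : Fin m, (∑ j, w j) / m / 2 ≤ uLoad w A ℓ := by
  classical
  intro ℓ
  set W := ∑ j, w j with hW
  set L := W / m with hL
  have hW0 : 0 ≤ W := Finset.sum_nonneg fun i _ => hw i
  have hm' : (0 : ℝ) < m := by exact_mod_cast hm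
  by_contra hcon
  push_neg at hcon
  -- L > 0
  have hL0 : 0 < L := by
    rcases lt_or_ge 0 L with h | h
    · exact h
    · exact absurd hcon (not_lt.2 (le_trans (by linarith) (uLoad_nonneg w hw A ℓ)))
  -- there is a resource with load > L
  have hex : ∃ j : Fin m, L < uLoad w A j := by
    by_contra hall
    push_neg at hall
    have hsum : ∑ j, uLoad w A j < ∑ j : Fin m, L := by
      apply Finset.sum_lt_sum
      · intro j _; exact hall j
      · exact ⟨ℓ, Finset.mem_univ ℓ, by linarith⟩
    rw [uLoad_sum] at hsum
    simp only [Finset.sum_const, Finset.card_univ, Fintype.card_fin, nsmul_eq_mul] at hsum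
    rw [hL] at hsum
    rw [mul_div_cancel₀ _ (ne_of_gt hm')] at hsum
    exact lt_irrefl _ hsum
  obtain ⟨j, hj⟩ := hex
  set S := univ.filter (fun i => A i = j) with hS
  have hSsum : uLoad w A j = ∑ i ∈ S, w i := rfl
  have hSne : S.Nonempty := by
    by_contra hne
    rw [Finset.not_nonempty_iff_eq_empty] at hne
    rw [hSsum, hne, Finset.sum_empty] at hj
    linarith
  obtain ⟨i₀, hi₀S, hi₀min⟩ := S.exists_min_image w hSne
  have hAi₀ : A i₀ = j := (Finset.mem_filter.1 hi₀S).2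
  -- there is another task on j
  have hex2 : ∃ i₁ ∈ S, i₁ ≠ i₀ := by
    by_contra hone
    push_neg at hone
    have : S = {i₀} := by
      apply Finset.eq_singleton_iff_unique_mem.2
      exact ⟨hi₀S, fun x hx => hone x hx⟩
    rw [hSsum, this, Finset.sum_singleton] at hj
    have := hwsmall i₀
    linarith
  obtain ⟨i₁, hi₁S, hi₁ne⟩ := hex2
  have hpair : w i₀ + w i₁ ≤ uLoad w A j := by
    rw [hSsum]
    have hsub : ({i₀, i₁} : Finset (Fin n)) ⊆ S := by
      intro x hx
      rcases Finset.mem_insert.1 hx with h | h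
      · exact h ▸ hi₀S
      · exact (Finset.mem_singleton.1 h) ▸ hi₁S
    calc w i₀ + w i₁ = ∑ i ∈ ({i₀, i₁} : Finset (Fin n)), w i := by
            rw [Finset.sum_pair (Ne.symm hi₁ne)]
      _ ≤ ∑ i ∈ S, w i :=
            Finset.sum_le_sum_of_subset_of_nonneg hsub (fun i _ _ => hw i)
  have hmin : w i₀ ≤ uLoad w A j / 2 := by
    have := hi₀min i₁ hi₁S
    linarith
  have hnash := hN i₀ ℓ
  rw [hAi₀] at hnash
  linarith
end

section
/- In any instance with identical unit-delay resources where every task weight satisfies w_i ≤ L_avg, the load of each task i in a Nash assignment A satisfies max{w_i, L_avg/2} ≤ L(A_i,A) ≤ L_avg + w_i. Consequently the cost of any Nash assignment is at most 3 times the cost of any other Nash assignment. -/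
open Finset

/-- With identical unit-delay resources and all task weights at most the average load
`L_avg = W/m`, in a Nash assignment each task's load lies between
`max (w i) (L_avg/2)` and `L_avg + w i`; consequently any Nash assignment costs at
most 3 times any other Nash assignment. -/
theorem nash_task_load_bounds
    (n m : ℕ) (hm : 0 < m) (w : Fin n → ℝ) (hw : ∀ i, 0 ≤ w i)
    (hwsmall : ∀ i, w i ≤ (∑ j, w j) / m) :
    (∀ A : Fin n → Fin m,
      (∀ (i : Fin n) (ℓ : Fin m), uLoad w A (A i) ≤ uLoad w A ℓ + w i) →
      ∀ i : Fin n,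
        max (w i) ((∑ j, w j) / m / 2) ≤ uLoad w A (A i) ∧
        uLoad w A (A i) ≤ (∑ j, w j) / m + w i) ∧
    (∀ A B : Fin n → Fin m,
      (∀ (i : Fin n) (ℓ : Fin m), uLoad w A (A i) ≤ uLoad w A ℓ + w i) →
      (∀ (i : Fin n) (ℓ : Fin m), uLoad w B (B i) ≤ uLoad w B ℓ + w i) →
      uCost w A ≤ 3 * uCost w B) := by
  have hm' : (m : ℝ) ≠ 0 := Nat.cast_ne_zero.mpr hm.ne'
  have hmpos : (0 : ℝ) < m := Nat.cast_pos.mpr hm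
  have hne : Nonempty (Fin m) := ⟨⟨0, hm⟩⟩
  set Lavg : ℝ := (∑ j, w j) / m with hLavg
  have hLnn : 0 ≤ Lavg := div_nonneg (Finset.sum_nonneg fun j _ => hw j) hmpos.le
  have hsum : ∀ A : Fin n → Fin m, ∑ ℓ, uLoad w A ℓ = (m : ℝ) * Lavg := by
    intro A
    have h := Finset.sum_fiberwise (univ : Finset (Fin n)) A w
    have : ∑ ℓ, uLoad w A ℓ = ∑ j, w j := h
    rw [this, hLavg]
    field_simp
  have hbounds : ∀ A : Fin n → Fin m,
      (∀ (i : Fin n) (ℓ : Fin m), uLoad w A (A i) ≤ uLoad w A ℓ + w i) →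
      ∀ i : Fin n,
        max (w i) (Lavg / 2) ≤ uLoad w A (A i) ∧ uLoad w A (A i) ≤ Lavg + w i := by
    intro A hN i
    have hself : ∀ j : Fin n, w j ≤ uLoad w A (A j) := fun j =>
      Finset.single_le_sum (fun k _ => hw k) (by simp)
    have hloadnn : ∀ ℓ, 0 ≤ uLoad w A ℓ := fun ℓ => Finset.sum_nonneg fun k _ => hw k
    constructor
    · rw [max_le_iff]
      refine ⟨hself i, ?_⟩
      by_contra hlt
      push_neg at hlt
      have hex : ∃ ℓ, Lavg < uLoad w A ℓ := by
        by_contra hall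
        push_neg at hall
        have hstrict : ∑ ℓ, uLoad w A ℓ < ∑ _ℓ : Fin m, Lavg :=
          Finset.sum_lt_sum (fun ℓ _ => hall ℓ)
            ⟨A i, Finset.mem_univ _, lt_of_lt_of_le hlt (by linarith)⟩
        rw [hsum A, Finset.sum_const, Finset.card_univ, Fintype.card_fin,
          nsmul_eq_mul] at hstrict
        linarith
      obtain ⟨ℓ, hℓ⟩ := hex
      set S := univ.filter (fun j => A j = ℓ) with hS
      have hSload : uLoad w A ℓ = ∑ j ∈ S, w j := rfl
      have hSne : S.Nonempty := by
        by_contra h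
        rw [Finset.not_nonempty_iff_eq_empty] at h
        rw [hSload, h, Finset.sum_empty] at hℓ
        linarith
      obtain ⟨j, hjS, hjmin⟩ := Finset.exists_min_image S w hSne
      have hAj : A j = ℓ := (Finset.mem_filter.mp hjS).2
      have h2 : 2 * w j ≤ uLoad w A ℓ := by
        have hcard : 1 < S.card := by
          by_contra hc
          push_neg at hc
          have h1 : S.card = 1 := le_antisymm hc (Finset.card_pos.mpr hSne)
          obtain ⟨a, ha⟩ := Finset.card_eq_one.mp h1
          have hja : j = a := by simpa [ha] using hjS
          have : uLoad w A ℓ = w j := by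
            rw [hSload, ha, Finset.sum_singleton, hja]
          have := hwsmall j
          linarith
        obtain ⟨k, hkS, hkj⟩ := Finset.exists_mem_ne hcard j
        have hkE : k ∈ S.erase j := Finset.mem_erase.mpr ⟨hkj, hkS⟩
        have hk : w k ≤ ∑ x ∈ S.erase j, w x :=
          Finset.single_le_sum (fun x _ => hw x) hkE
        have hsplit : w j + ∑ x ∈ S.erase j, w x = ∑ x ∈ S, w x :=
          Finset.add_sum_erase S w hjS
        have hjk : w j ≤ w k := hjmin k hkS
        rw [hSload]
        linarith
      have hnash := hN j (A i)
      rw [hAj] at hnash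
      linarith
    · obtain ⟨ℓ, -, hℓ⟩ : ∃ ℓ ∈ (univ : Finset (Fin m)), uLoad w A ℓ ≤ Lavg := by
        apply Finset.exists_le_of_sum_le Finset.univ_nonempty
        rw [hsum A, Finset.sum_const, Finset.card_univ, Fintype.card_fin, nsmul_eq_mul]
      have := hN i ℓ
      linarith
  refine ⟨hbounds, ?_⟩
  intro A B hA hB
  unfold uCost
  rw [Finset.mul_sum]
  apply Finset.sum_le_sum
  intro i _
  have h1 := (hbounds A hA i).2
  have h2 := (hbounds B hB i).1
  have hw' : w i ≤ uLoad w B (B i) := le_trans (le_max_left _ _) h2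
  have hL' : Lavg / 2 ≤ uLoad w B (B i) := le_trans (le_max_right _ _) h2
  linarith
end

section
/- For every ε > 0 there exists an instance with identical unit-delay resources and two Nash assignments N₁, N₂ with C(N₁) ≤ (3/5)(1+ε)·C(N₂). Concretely, with M = ⌈2/ε⌉, 6 resources, 6 tasks of weight 3M, 6 tasks of weight 6M and 6M+1 tasks of weight 1: the assignment placing all unit tasks on resource 1, pairs of weight-6M tasks on resources 2–4, and triples of weight-3M tasks on resources 5–6 is Nash with cost 36M²+138M+1; the assignment placing on each resource one weight-6M task, one weight-3M task, and M (or M+1 on resource 6) unit tasks is Nash with cost at least (6M+13)·10M; and the ratio of these costs is at most (3/5)(1+ε). -/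
open Finset

noncomputable def tw (M k : ℕ) : ℝ :=
  if k < 6 then 6 * M else if k < 12 then 3 * M else 1

def g1 (k : ℕ) : ℕ := if k < 6 then 1 + k / 2 else if k < 12 then 4 + (k - 6) / 3 else 0
def g2 (k : ℕ) : ℕ := if k < 6 then k else if k < 12 then k - 6 else (k - 12) % 6

lemma cnt (M r : ℕ) (hr : r < 6) :
    ∑ j ∈ range (6 * M + 1), (if j % 6 = r then (1:ℝ) else 0)
      = M + if r = 0 then 1 else 0 := by
  induction M with
  | zero =>
      simp only [Nat.mul_zero, Nat.zero_add, sum_range_one, Nat.zero_mod, Nat.cast_zero]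
      interval_cases r <;> norm_num
  | succ M ih =>
      have h : 6 * (M + 1) + 1 = (6 * M + 1) + 6 := by ring
      rw [h, sum_range_add, ih]
      have e0 : (6 * M + 1 + 0) % 6 = 1 := by omega
      have e1 : (6 * M + 1 + 1) % 6 = 2 := by omega
      have e2 : (6 * M + 1 + 2) % 6 = 3 := by omega
      have e3 : (6 * M + 1 + 3) % 6 = 4 := by omega
      have e4 : (6 * M + 1 + 4) % 6 = 5 := by omega
      have e5 : (6 * M + 1 + 5) % 6 = 0 := by omega
      rw [show (6:ℕ) = 5 + 1 from rfl, sum_range_succ, sum_range_succ, sum_range_succ,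
        sum_range_succ, sum_range_succ, sum_range_one, e0, e1, e2, e3, e4, e5]
      have : ((if 1 = r then (1:ℝ) else 0) + (if 2 = r then (1:ℝ) else 0)
          + (if 3 = r then (1:ℝ) else 0) + (if 4 = r then (1:ℝ) else 0)
          + (if 5 = r then (1:ℝ) else 0) + (if 0 = r then (1:ℝ) else 0)) = 1 := by
        interval_cases r <;> norm_num
      push_cast
      linarith [this]

lemma load1 (M r : ℕ) (hr : r < 6) :
    ∑ k ∈ range (12 + (6 * M + 1)), (if g1 k = r then tw M k else 0)
      = if r = 0 then 6 * (M:ℝ) + 1 else if r ≤ 3 then 12 * M else 9 * M := by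
  rw [sum_range_add]
  have h2 : ∑ j ∈ range (6 * M + 1), (if g1 (12 + j) = r then tw M (12 + j) else 0)
      = (6 * M + 1) * (if r = 0 then (1:ℝ) else 0) := by
    have key : ∀ j ∈ range (6 * M + 1),
        (if g1 (12 + j) = r then tw M (12 + j) else 0) = (if r = 0 then (1:ℝ) else 0) := by
      intro j _
      have hg : g1 (12 + j) = 0 := by unfold g1; rw [if_neg (by omega), if_neg (by omega)]
      have ht : tw M (12 + j) = 1 := by unfold tw; rw [if_neg (by omega), if_neg (by omega)]
      rw [hg, ht]
      by_cases h : r = 0 <;> simp [h, eq_comm]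
    rw [sum_congr rfl key, sum_const, card_range, nsmul_eq_mul]
    push_cast; ring
  rw [h2]
  norm_num [sum_range_succ, g1, tw]
  interval_cases r <;> norm_num <;> push_cast <;> ring

lemma load2 (M r : ℕ) (hr : r < 6) :
    ∑ k ∈ range (12 + (6 * M + 1)), (if g2 k = r then tw M k else 0)
      = if r = 0 then 10 * (M:ℝ) + 1 else 10 * M := by
  rw [sum_range_add]
  have h2 : ∑ j ∈ range (6 * M + 1), (if g2 (12 + j) = r then tw M (12 + j) else 0)
      = (M:ℝ) + if r = 0 then 1 else 0 := by
    have key : ∀ j ∈ range (6 * M + 1),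
        (if g2 (12 + j) = r then tw M (12 + j) else 0) = (if j % 6 = r then (1:ℝ) else 0) := by
      intro j _
      have hg : g2 (12 + j) = j % 6 := by
        unfold g2; rw [if_neg (by omega), if_neg (by omega)]; congr 1; omega
      have ht : tw M (12 + j) = 1 := by unfold tw; rw [if_neg (by omega), if_neg (by omega)]
      rw [hg, ht]
    rw [sum_congr rfl key, cnt M r hr]
  rw [h2]
  norm_num [sum_range_succ, g2, tw]
  interval_cases r <;> norm_num <;> push_cast <;> ring

lemma cost1 (M : ℕ) :
    ∑ k ∈ range (12 + (6 * M + 1)),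
        (if g1 k = 0 then 6 * (M:ℝ) + 1 else if g1 k ≤ 3 then 12 * (M:ℝ) else 9 * M)
      = 36 * (M:ℝ) ^ 2 + 138 * M + 1 := by
  rw [sum_range_add]
  have h2 : ∑ j ∈ range (6 * M + 1),
      (if g1 (12 + j) = 0 then 6 * (M:ℝ) + 1 else if g1 (12 + j) ≤ 3 then 12 * (M:ℝ) else 9 * M)
      = (6 * M + 1) * (6 * (M:ℝ) + 1) := by
    have key : ∀ j ∈ range (6 * M + 1),
        (if g1 (12 + j) = 0 then 6 * (M:ℝ) + 1 else if g1 (12 + j) ≤ 3 then 12 * (M:ℝ) else 9 * M)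
          = 6 * (M:ℝ) + 1 := by
      intro j _
      have hg : g1 (12 + j) = 0 := by unfold g1; rw [if_neg (by omega), if_neg (by omega)]
      rw [hg]; norm_num
    rw [sum_congr rfl key, sum_const, card_range, nsmul_eq_mul]
    push_cast; ring
  rw [h2]
  norm_num [sum_range_succ, g1]
  push_cast; ring

lemma cost2 (M : ℕ) :
    ∑ k ∈ range (12 + (6 * M + 1)),
        (if g2 k = 0 then 10 * (M:ℝ) + 1 else 10 * (M:ℝ))
      = 60 * (M:ℝ) ^ 2 + 131 * M + 3 := by
  rw [sum_range_add]
  have h2 : ∑ j ∈ range (6 * M + 1),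
      (if g2 (12 + j) = 0 then 10 * (M:ℝ) + 1 else 10 * (M:ℝ))
      = (6 * M + 1) * (10 * (M:ℝ)) + ((M:ℝ) + 1) := by
    have key : ∀ j ∈ range (6 * M + 1),
        (if g2 (12 + j) = 0 then 10 * (M:ℝ) + 1 else 10 * (M:ℝ))
          = 10 * (M:ℝ) + (if j % 6 = 0 then (1:ℝ) else 0) := by
      intro j _
      have hg : g2 (12 + j) = j % 6 := by
        unfold g2; rw [if_neg (by omega), if_neg (by omega)]; congr 1; omega
      rw [hg]; split_ifs <;> norm_num
    rw [sum_congr rfl key, sum_add_distrib, sum_const, card_range, nsmul_eq_mul,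
      cnt M 0 (by norm_num)]
    push_cast; ring
  rw [h2]
  norm_num [sum_range_succ, g2]
  push_cast; ring

lemma g1_lt (k : ℕ) : g1 k < 6 := by unfold g1; split_ifs <;> omega
lemma g2_lt (k : ℕ) : g2 k < 6 := by unfold g2; split_ifs <;> omega

lemma uLoad_eq {n m : ℕ} (w : Fin n → ℝ) (A : Fin n → Fin m) (ℓ : Fin m) :
    uLoad w A ℓ = ∑ i : Fin n, if A i = ℓ then w i else 0 := by
  rw [uLoad, sum_filter]

/-- For every `ε > 0` there is an instance with six identical unit-delay resources
(with `M = ⌈2/ε⌉`, `6M+13` tasks of weights `1`, `3M`, `6M`) admitting two Nash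
assignments `N₁`, `N₂` with `C(N₁) = 36M² + 138M + 1`, `C(N₂) ≥ (6M+13)·10M`, and
`C(N₁) ≤ (3/5)(1+ε)·C(N₂)`. -/
theorem two_nash_ratio_three_fifths (ε : ℝ) (hε : 0 < ε) :
    ∃ (M nt : ℕ) (w : Fin nt → ℝ) (N₁ N₂ : Fin nt → Fin 6),
      M = ⌈2 / ε⌉₊ ∧ nt = 6 * M + 13 ∧
      (∀ i, w i = 1 ∨ w i = 3 * (M : ℝ) ∨ w i = 6 * (M : ℝ)) ∧
      (∀ (i : Fin nt) (ℓ : Fin 6), uLoad w N₁ (N₁ i) ≤ uLoad w N₁ ℓ + w i) ∧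
      (∀ (i : Fin nt) (ℓ : Fin 6), uLoad w N₂ (N₂ i) ≤ uLoad w N₂ ℓ + w i) ∧
      uCost w N₁ = 36 * (M : ℝ) ^ 2 + 138 * (M : ℝ) + 1 ∧
      (6 * (M : ℝ) + 13) * (10 * (M : ℝ)) ≤ uCost w N₂ ∧
      uCost w N₁ ≤ (3 / 5) * (1 + ε) * uCost w N₂ := by
  set M : ℕ := ⌈2 / ε⌉₊ with hM
  have hM1 : 1 ≤ M := by
    have h0 : (0:ℝ) < 2 / ε := by positivity
    exact Nat.one_le_iff_ne_zero.mpr (by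
      simp only [hM, ne_eq, Nat.ceil_eq_zero, not_le]; exact h0)
  have hMR : (1:ℝ) ≤ (M:ℝ) := by exact_mod_cast hM1
  have hεM : (2:ℝ) ≤ ε * M := by
    have h2 : (2:ℝ) / ε ≤ M := Nat.le_ceil _
    calc (2:ℝ) = ε * (2 / ε) := by field_simp
    _ ≤ ε * M := by exact mul_le_mul_of_nonneg_left h2 hε.le
  have hsplit : 6 * M + 13 = 12 + (6 * M + 1) := by ring
  set w : Fin (6 * M + 13) → ℝ := fun i => tw M i.val with hw
  set A1 : Fin (6 * M + 13) → Fin 6 := fun i => ⟨g1 i.val, g1_lt _⟩ with hA1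
  set A2 : Fin (6 * M + 13) → Fin 6 := fun i => ⟨g2 i.val, g2_lt _⟩ with hA2
  have hL1 : ∀ ℓ : Fin 6, uLoad w A1 ℓ
      = (if ℓ.val = 0 then 6 * (M:ℝ) + 1 else if ℓ.val ≤ 3 then 12 * M else 9 * M) := by
    intro ℓ
    rw [uLoad_eq]
    have hcg : (∑ i : Fin (6*M+13), if A1 i = ℓ then w i else 0)
        = ∑ i : Fin (6*M+13), (fun k => if g1 k = ℓ.val then tw M k else 0) i.val :=
      sum_congr rfl (fun i _ => by simp [hA1, hw, Fin.ext_iff])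
    rw [hcg]
    refine (Fin.sum_univ_eq_sum_range (fun k => if g1 k = ℓ.val then tw M k else 0) (6 * M + 13)).trans ?_
    rw [hsplit]
    exact load1 M ℓ.val ℓ.isLt
  have hL2 : ∀ ℓ : Fin 6, uLoad w A2 ℓ
      = (if ℓ.val = 0 then 10 * (M:ℝ) + 1 else 10 * M) := by
    intro ℓ
    rw [uLoad_eq]
    have hcg : (∑ i : Fin (6*M+13), if A2 i = ℓ then w i else 0)
        = ∑ i : Fin (6*M+13), (fun k => if g2 k = ℓ.val then tw M k else 0) i.val :=
      sum_congr rfl (fun i _ => by simp [hA2, hw, Fin.ext_iff])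
    rw [hcg]
    refine (Fin.sum_univ_eq_sum_range (fun k => if g2 k = ℓ.val then tw M k else 0) (6 * M + 13)).trans ?_
    rw [hsplit]
    exact load2 M ℓ.val ℓ.isLt
  have hC1 : uCost w A1 = 36 * (M:ℝ) ^ 2 + 138 * M + 1 := by
    rw [uCost]
    have hcg : (∑ i : Fin (6*M+13), uLoad w A1 (A1 i))
        = ∑ i : Fin (6*M+13), (fun k => if g1 k = 0 then 6 * (M:ℝ) + 1
            else if g1 k ≤ 3 then 12 * (M:ℝ) else 9 * M) i.val := by
      refine sum_congr rfl (fun i _ => ?_)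
      rw [hL1 (A1 i)]
    rw [hcg]
    refine (Fin.sum_univ_eq_sum_range (fun k => if g1 k = 0 then 6 * (M:ℝ) + 1 else if g1 k ≤ 3 then 12 * (M:ℝ) else 9 * M) (6 * M + 13)).trans ?_
    rw [hsplit]
    exact cost1 M
  have hC2 : uCost w A2 = 60 * (M:ℝ) ^ 2 + 131 * M + 3 := by
    rw [uCost]
    have hcg : (∑ i : Fin (6*M+13), uLoad w A2 (A2 i))
        = ∑ i : Fin (6*M+13), (fun k => if g2 k = 0 then 10 * (M:ℝ) + 1 else 10 * (M:ℝ)) i.val := by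
      refine sum_congr rfl (fun i _ => ?_)
      rw [hL2 (A2 i)]
    rw [hcg]
    refine (Fin.sum_univ_eq_sum_range (fun k => if g2 k = 0 then 10 * (M:ℝ) + 1 else 10 * (M:ℝ)) (6 * M + 13)).trans ?_
    rw [hsplit]
    exact cost2 M
  refine ⟨M, 6 * M + 13, w, A1, A2, rfl, rfl, ?_, ?_, ?_, hC1, ?_, ?_⟩
  · intro i
    simp only [hw, tw]
    split_ifs <;> tauto
  · intro i ℓ
    rw [hL1, hL1]
    have hval : (A1 i).val = g1 i.val := rfl
    rw [hval]
    by_cases h6 : i.val < 6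
    · have hg : g1 i.val = 1 + i.val / 2 := by unfold g1; rw [if_pos h6]
      have hwi : w i = 6 * (M:ℝ) := by simp only [hw, tw]; rw [if_pos h6]
      rw [hwi, if_neg (by omega), if_pos (by omega)]
      split_ifs <;> linarith
    · by_cases h12 : i.val < 12
      · have hg : g1 i.val = 4 + (i.val - 6) / 3 := by
          unfold g1; rw [if_neg h6, if_pos h12]
        have hwi : w i = 3 * (M:ℝ) := by
          simp only [hw, tw]; rw [if_neg h6, if_pos h12]
        rw [hwi, if_neg (by omega), if_neg (by omega)]
        split_ifs <;> linarith
      · have hg : g1 i.val = 0 := by unfold g1; rw [if_neg h6, if_neg h12]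
        have hwi : w i = 1 := by simp only [hw, tw]; rw [if_neg h6, if_neg h12]
        rw [hwi, if_pos (by omega)]
        split_ifs <;> linarith
  · intro i ℓ
    rw [hL2, hL2]
    have hwge : (1:ℝ) ≤ w i := by
      simp only [hw, tw]; split_ifs <;> linarith
    split_ifs <;> linarith
  · rw [hC2]; nlinarith [hMR]
  · rw [hC1, hC2]
    nlinarith [hεM, hMR, hε.le, mul_le_mul_of_nonneg_right hεM (by linarith : (0:ℝ) ≤ (M:ℝ)),
      mul_nonneg hε.le (by linarith : (0:ℝ) ≤ (M:ℝ))]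
end

section
/- (Unit-weight tasks, represented by counts.) Let d_1,...,d_m > 0 and let n̄ = ⟨n_1,...,n_m⟩ be a lowest-cost assignment of n unit tasks (Σ n_ℓ = n, cost C(n̄) = Σ_ℓ n_ℓ² d_ℓ). Let k minimize (2n_k + 1)d_k over all resources. Then the assignment ψ̄ obtained from n̄ by incrementing n_k is a lowest-cost assignment of n+1 unit tasks. -/
/-- Cost of an assignment of unit tasks given by counts `v`: `∑ ℓ, (v ℓ)² d ℓ`. -/
noncomputable def cCost {m : ℕ} (d : Fin m → ℝ) (v : Fin m → ℕ) : ℝ :=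
  ∑ ℓ, ((v ℓ : ℝ)) ^ 2 * d ℓ

lemma cCost_update_add_one {m : ℕ} (d : Fin m → ℝ) (w : Fin m → ℕ) (i : Fin m) :
    cCost d (Function.update w i (w i + 1)) = cCost d w + (2 * (w i : ℝ) + 1) * d i := by
  unfold cCost
  rw [← Finset.sum_erase_add _ _ (Finset.mem_univ i),
      ← Finset.sum_erase_add Finset.univ (fun ℓ => ((w ℓ : ℝ)) ^ 2 * d ℓ) (Finset.mem_univ i)]
  have h1 : ∑ ℓ ∈ Finset.univ.erase i, ((Function.update w i (w i + 1) ℓ : ℝ)) ^ 2 * d ℓ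
      = ∑ ℓ ∈ Finset.univ.erase i, ((w ℓ : ℝ)) ^ 2 * d ℓ := by
    refine Finset.sum_congr rfl fun ℓ hℓ => ?_
    rw [Function.update_of_ne (Finset.ne_of_mem_erase hℓ)]
  rw [h1, Function.update_self]
  push_cast
  ring

/-- If `nb` is a lowest-cost assignment of `n` unit tasks and `k` minimizes
`(2 n_k + 1) d_k`, then incrementing `n_k` yields a lowest-cost assignment of `n+1`
unit tasks. -/
theorem add_one_task_optimal
    (m n : ℕ) (d : Fin m → ℝ) (hd : ∀ ℓ, 0 < d ℓ)
    (nb : Fin m → ℕ) (hsum : ∑ ℓ, nb ℓ = n)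
    (hopt : ∀ v : Fin m → ℕ, (∑ ℓ, v ℓ) = n → cCost d nb ≤ cCost d v)
    (k : Fin m) (hk : ∀ j, (2 * (nb k : ℝ) + 1) * d k ≤ (2 * (nb j : ℝ) + 1) * d j) :
    ∀ v : Fin m → ℕ, (∑ ℓ, v ℓ) = n + 1 →
      cCost d (Function.update nb k (nb k + 1)) ≤ cCost d v := by
  intro v hv
  -- find j with nb j < v j
  have hj : ∃ j, nb j < v j := by
    by_contra h
    push_neg at h
    have : ∑ ℓ, v ℓ ≤ ∑ ℓ, nb ℓ := Finset.sum_le_sum fun ℓ _ => h ℓ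
    omega
  obtain ⟨j, hj⟩ := hj
  set w : Fin m → ℕ := Function.update v j (v j - 1) with hw
  have hwj : w j = v j - 1 := Function.update_self _ _ _
  have hvw : v = Function.update w j (w j + 1) := by
    funext ℓ
    by_cases hℓ : ℓ = j
    · subst hℓ
      rw [Function.update_self, hwj]
      omega
    · rw [Function.update_of_ne hℓ, hw, Function.update_of_ne hℓ]
  have hwsum : ∑ ℓ, w ℓ = n := by
    have := Finset.sum_update_of_mem (Finset.mem_univ j) v (v j - 1)
    have h2 := Finset.sum_update_of_mem (Finset.mem_univ j) v (v j)
    simp only [Function.update_eq_self] at h2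
    rw [hw, this]
    omega
  have h1 : cCost d (Function.update nb k (nb k + 1)) = cCost d nb + (2 * (nb k : ℝ) + 1) * d k :=
    cCost_update_add_one d nb k
  have h2 : cCost d v = cCost d w + (2 * (w j : ℝ) + 1) * d j := by
    rw [hvw]; exact cCost_update_add_one d w j
  have h3 : cCost d nb ≤ cCost d w := hopt w hwsum
  have h4 : (2 * (nb k : ℝ) + 1) * d k ≤ (2 * (w j : ℝ) + 1) * d j := by
    refine (hk j).trans ?_
    have : (nb j : ℝ) ≤ (w j : ℝ) := by
      have : nb j ≤ w j := by rw [hwj]; omega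
      exact_mod_cast this
    nlinarith [(hd j).le]
  rw [h1, h2]
  linarith
end

section
/- (Unit-weight tasks.) If n̄ and ρ̄ are both Nash assignments of the same n unit tasks to resources with delays d_1,...,d_m > 0, then |n_j − ρ_j| ≤ 1 for every resource j. -/
/-- A counts-assignment `v` of unit tasks is Nash iff `v i * d i ≤ (v j + 1) * d j`
for all resources `i`, `j` with `v i ≥ 1`. -/
def CountsNash {m : ℕ} (d : Fin m → ℝ) (v : Fin m → ℕ) : Prop :=
  ∀ i j : Fin m, 1 ≤ v i → (v i : ℝ) * d i ≤ ((v j : ℝ) + 1) * d j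

lemma nash_counts_le
    {m : ℕ} (d : Fin m → ℝ) (hd : ∀ ℓ, 0 < d ℓ)
    (nb ρ : Fin m → ℕ) (hsum : ∑ ℓ, nb ℓ = ∑ ℓ, ρ ℓ)
    (hNnb : CountsNash d nb) (hNρ : CountsNash d ρ) (j : Fin m) :
    nb j ≤ ρ j + 1 := by
  by_contra h
  push_neg at h
  -- nb j ≥ ρ j + 2
  obtain ⟨i, hi⟩ : ∃ i, nb i < ρ i := by
    by_contra hall
    push_neg at hall
    have : ∑ ℓ, ρ ℓ < ∑ ℓ, nb ℓ :=
      Finset.sum_lt_sum (fun ℓ _ => hall ℓ) ⟨j, Finset.mem_univ j, by omega⟩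
    omega
  have h1 : (nb j : ℝ) * d j ≤ ((nb i : ℝ) + 1) * d i := hNnb j i (by omega)
  have h2 : (ρ i : ℝ) * d i ≤ ((ρ j : ℝ) + 1) * d j := hNρ i j (by omega)
  have h3 : ((nb i : ℝ) + 1) * d i ≤ (ρ i : ℝ) * d i := by
    have : (nb i : ℝ) + 1 ≤ (ρ i : ℝ) := by exact_mod_cast Nat.succ_le_of_lt hi
    exact mul_le_mul_of_nonneg_right this (hd i).le
  have h4 : ((ρ j : ℝ) + 2) * d j ≤ (nb j : ℝ) * d j := by
    have : (ρ j : ℝ) + 2 ≤ (nb j : ℝ) := by exact_mod_cast (by omega : ρ j + 2 ≤ nb j)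
    exact mul_le_mul_of_nonneg_right this (hd j).le
  nlinarith [hd j]

/-- Any two Nash assignments of the same `n` unit tasks differ by at most one task
on every resource. -/
theorem nash_counts_differ_by_at_most_one
    (m n : ℕ) (d : Fin m → ℝ) (hd : ∀ ℓ, 0 < d ℓ)
    (nb ρ : Fin m → ℕ) (hnb : ∑ ℓ, nb ℓ = n) (hρ : ∑ ℓ, ρ ℓ = n)
    (hNnb : CountsNash d nb) (hNρ : CountsNash d ρ) :
    ∀ j : Fin m, |(nb j : ℤ) - (ρ j : ℤ)| ≤ 1 := by
  intro j
  have h1 := nash_counts_le d hd nb ρ (by omega) hNnb hNρ j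
  have h2 := nash_counts_le d hd ρ nb (by omega) hNρ hNnb j
  rw [abs_le]
  omega
end

section
/- There is an instance with two resources with delays 1/2 and 1+ε (for any 0 < ε) and two unit-weight tasks in which the unique Nash assignment places both tasks on the first resource with cost 2, while the assignment splitting the tasks has cost 3/2 + ε. Hence min_{N Nash} C(N) ≥ (4/3 − ε)·min_A C(A) for this instance (for ε ≤ some bound). -/
/-- Cost of assignment `⟨a, b⟩` of unit tasks to two resources with delays `1/2`
and `1 + ε`. -/
noncomputable def c13 (ε : ℝ) (a b : ℕ) : ℝ :=
  (a : ℝ) ^ 2 * (1 / 2) + (b : ℝ) ^ 2 * (1 + ε)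

/-- `⟨a, b⟩` is Nash for the two resources with delays `1/2` and `1 + ε`. -/
def Nash13 (ε : ℝ) (a b : ℕ) : Prop :=
  (1 ≤ a → (a : ℝ) * (1 / 2) ≤ ((b : ℝ) + 1) * (1 + ε)) ∧
  (1 ≤ b → (b : ℝ) * (1 + ε) ≤ ((a : ℝ) + 1) * (1 / 2))

/-- Two resources with delays `1/2` and `1+ε` and two unit tasks: the unique Nash
assignment puts both tasks on the first resource at cost `2`, the split assignment
costs `3/2 + ε`, and every Nash assignment costs at least `(4/3 − ε)` times the
minimum cost over all assignments. -/
theorem unique_nash_vs_optimum (ε : ℝ) (hε : 0 < ε) :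
    Nash13 ε 2 0 ∧ c13 ε 2 0 = 2 ∧ c13 ε 1 1 = 3 / 2 + ε ∧
    (∀ a b : ℕ, a + b = 2 → Nash13 ε a b → a = 2 ∧ b = 0) ∧
    (∀ a b : ℕ, a + b = 2 → Nash13 ε a b →
      (4 / 3 - ε) * min (c13 ε 2 0) (min (c13 ε 1 1) (c13 ε 0 2)) ≤ c13 ε a b) := by

  have huniq : ∀ a b : ℕ, a + b = 2 → Nash13 ε a b → a = 2 ∧ b = 0 := by
    intro a b hab hn
    have ha2 : a ≤ 2 := by omega
    have hb2 : b ≤ 2 := by omega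
    interval_cases a <;> interval_cases b <;> simp_all [Nash13] <;> nlinarith
  refine ⟨⟨fun _ => by push_cast; nlinarith, fun h => by omega⟩,
    by simp [c13]; ring, by simp [c13]; ring, huniq, ?_⟩
  intro a b hab hn
  obtain ⟨ha, hb⟩ := huniq a b hab hn
  subst ha; subst hb
  have h1 : c13 ε 2 0 = 2 := by simp [c13]; ring
  have h2 : c13 ε 1 1 = 3/2 + ε := by simp [c13]; ring
  have h3 : c13 ε 0 2 = 4 + 4*ε := by simp [c13]; ring
  rw [h1, h2, h3]
  rcases le_total (4/3 - ε) 0 with h | h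
  · have : (0:ℝ) ≤ min 2 (min (3/2+ε) (4+4*ε)) := by positivity
    nlinarith
  · have : min 2 (min (3/2+ε) (4+4*ε)) ≤ 3/2 + ε :=
      le_trans (min_le_right _ _) (min_le_left _ _)
    nlinarith
end

section
/- (Unit-weight tasks.) For any instance with n unit tasks and resources with delays d_1,...,d_m > 0, any two Nash assignments n̄ and ρ̄ satisfy C(ρ̄) ≤ (4/3)·C(n̄). -/
lemma nash_close {m : ℕ} (d : Fin m → ℝ) (hd : ∀ ℓ, 0 < d ℓ) (v w : Fin m → ℕ)
    (hs : ∑ ℓ, v ℓ = ∑ ℓ, w ℓ) (hv : CountsNash d v) (hw : CountsNash d w)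
    (i : Fin m) : v i ≤ w i + 1 := by
  by_contra h
  push_neg at h
  have hj : ∃ j, v j < w j := by
    by_contra hj
    push_neg at hj
    have : ∑ ℓ, w ℓ < ∑ ℓ, v ℓ :=
      Finset.sum_lt_sum (fun ℓ _ => hj ℓ) ⟨i, Finset.mem_univ i, by omega⟩
    omega
  obtain ⟨j, hj⟩ := hj
  have h1 : (v i : ℝ) * d i ≤ ((v j : ℝ) + 1) * d j := hv i j (by omega)
  have h2 : (w j : ℝ) * d j ≤ ((w i : ℝ) + 1) * d i := hw j i (by omega)
  have hji : ((v j : ℝ) + 1) ≤ (w j : ℝ) := by exact_mod_cast Nat.cast_le.mpr hj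
  have hij : ((w i : ℝ) + 1) ≤ (v i : ℝ) - 1 := by
    have : w i + 2 ≤ v i := by omega
    have := (Nat.cast_le (α := ℝ)).mpr this
    push_cast at this ⊢
    linarith
  have hdj := (hd j).le
  have hdi := hd i
  nlinarith [mul_le_mul_of_nonneg_right hji hdj, mul_le_mul_of_nonneg_right hij hdi.le]

lemma pair_bound (x y a b : ℝ) (hx : 0 < x) (hy : 0 < y) (ha : 0 ≤ a) (hb : 1 ≤ b)
    (h : (a + 1) * x ≤ b * y) :
    ((a + 1) ^ 2 * x - a ^ 2 * x) + ((b - 1) ^ 2 * y - b ^ 2 * y) ≤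
      (1 / 3) * (a ^ 2 * x) + (1 / 3) * (b ^ 2 * y) := by
  nlinarith [sq_nonneg (a - 1), mul_nonneg (sub_nonneg.2 hb) hy.le,
    mul_nonneg (mul_nonneg (sub_nonneg.2 hb) (sub_nonneg.2 hb)) hy.le,
    mul_nonneg ha hx.le, mul_pos hx hy, sq_nonneg (b - 2),
    mul_nonneg (mul_nonneg (sub_nonneg.2 hb) ha) hx.le]

/-- For unit tasks, any two Nash assignments of the same `n` tasks satisfy
`C(ρ) ≤ (4/3) C(n̄)`. -/
theorem nash_cost_ratio_unit_tasks
    (m n : ℕ) (d : Fin m → ℝ) (hd : ∀ ℓ, 0 < d ℓ)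
    (nb ρ : Fin m → ℕ) (hnb : ∑ ℓ, nb ℓ = n) (hρ : ∑ ℓ, ρ ℓ = n)
    (hNnb : CountsNash d nb) (hNρ : CountsNash d ρ) :
    cCost d ρ ≤ (4 / 3) * cCost d nb := by
  have hsum : ∑ ℓ, nb ℓ = ∑ ℓ, ρ ℓ := by rw [hnb, hρ]
  have h1 : ∀ i, ρ i ≤ nb i + 1 := nash_close d hd ρ nb hsum.symm hNρ hNnb
  have h2 : ∀ i, nb i ≤ ρ i + 1 := nash_close d hd nb ρ hsum hNnb hNρ
  classical
  set A : Finset (Fin m) := Finset.univ.filter (fun ℓ => ρ ℓ = nb ℓ + 1) with hA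
  set B : Finset (Fin m) := Finset.univ.filter (fun ℓ => nb ℓ = ρ ℓ + 1) with hB
  have hdisj : Disjoint A B := by
    rw [Finset.disjoint_left]
    intro ℓ hℓA hℓB
    simp [hA, hB] at hℓA hℓB
    omega
  -- card equality via integer sums
  have hzsum : ∑ ℓ, ((ρ ℓ : ℤ) - (nb ℓ : ℤ)) = 0 := by
    rw [Finset.sum_sub_distrib]
    have : (∑ ℓ, (ρ ℓ : ℤ)) = (∑ ℓ, (nb ℓ : ℤ)) := by
      push_cast
      exact_mod_cast congrArg (Nat.cast : ℕ → ℤ) hsum.symm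
    omega
  have hsub : A ∪ B ⊆ Finset.univ := Finset.subset_univ _
  have hzsplit : ∑ ℓ, ((ρ ℓ : ℤ) - (nb ℓ : ℤ)) = ∑ ℓ ∈ A ∪ B, ((ρ ℓ : ℤ) - (nb ℓ : ℤ)) := by
    refine (Finset.sum_subset hsub ?_).symm
    intro ℓ _ hℓ
    simp [hA, hB] at hℓ
    have := h1 ℓ; have := h2 ℓ
    have : ρ ℓ = nb ℓ := by omega
    simp [this]
  have hAval : ∑ ℓ ∈ A, ((ρ ℓ : ℤ) - (nb ℓ : ℤ)) = A.card := by
    have h : ∀ ℓ ∈ A, ((ρ ℓ : ℤ) - (nb ℓ : ℤ)) = 1 := by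
      intro ℓ hℓ
      rw [hA, Finset.mem_filter] at hℓ
      rw [hℓ.2]; push_cast; ring
    rw [Finset.sum_congr rfl h]; simp
  have hBval : ∑ ℓ ∈ B, ((ρ ℓ : ℤ) - (nb ℓ : ℤ)) = -B.card := by
    have h : ∀ ℓ ∈ B, ((ρ ℓ : ℤ) - (nb ℓ : ℤ)) = -1 := by
      intro ℓ hℓ
      rw [hB, Finset.mem_filter] at hℓ
      rw [hℓ.2]; push_cast; ring
    rw [Finset.sum_congr rfl h]; simp
  have hcard : A.card = B.card := by
    have := hzsum
    rw [hzsplit, Finset.sum_union hdisj, hAval, hBval] at this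
    omega
  -- the difference function
  set t : Fin m → ℝ := fun ℓ => (ρ ℓ : ℝ) ^ 2 * d ℓ - (nb ℓ : ℝ) ^ 2 * d ℓ with ht
  set s : Fin m → ℝ := fun ℓ => (1 / 3) * ((nb ℓ : ℝ) ^ 2 * d ℓ) with hs'
  have key : ∑ ℓ, t ℓ ≤ ∑ ℓ, s ℓ := by
    have hts : ∑ ℓ, t ℓ = ∑ ℓ ∈ A ∪ B, t ℓ := by
      refine (Finset.sum_subset hsub ?_).symm
      intro ℓ _ hℓ
      simp only [Finset.mem_union] at hℓ
      push_neg at hℓ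
      obtain ⟨hℓ1, hℓ2⟩ := hℓ
      simp [hA] at hℓ1; simp [hB] at hℓ2
      have := h1 ℓ; have := h2 ℓ
      have heq : ρ ℓ = nb ℓ := by omega
      simp [ht, heq]
    rw [hts, Finset.sum_union hdisj]
    -- bijection between A and B
    have e : (A : Finset (Fin m)) ≃ (B : Finset (Fin m)) := Finset.equivOfCardEq hcard
    have hBsum : ∀ f : Fin m → ℝ, ∑ ℓ ∈ B, f ℓ = ∑ a : A, f (e a) := by
      intro f
      rw [← Finset.sum_coe_sort B f]
      exact (Equiv.sum_comp e (fun b => f b)).symm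
    have hAsum : ∀ f : Fin m → ℝ, ∑ ℓ ∈ A, f ℓ = ∑ a : A, f a := by
      intro f
      exact (Finset.sum_coe_sort A f).symm
    have hpair : ∀ a : A, t a + t (e a) ≤ s a + s (e a) := by
      intro a
      have haA : ρ (a : Fin m) = nb (a : Fin m) + 1 :=
        (Finset.mem_filter.mp a.2).2
      have hbB : nb ((e a : Fin m)) = ρ ((e a : Fin m)) + 1 :=
        (Finset.mem_filter.mp (e a).2).2
      -- Nash condition for ρ at a vs e a
      have hnash : (ρ a : ℝ) * d a ≤ ((ρ (e a) : ℝ) + 1) * d (e a) :=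
        hNρ a (e a) (by omega)
      have hx := hd (a : Fin m)
      have hy := hd ((e a : Fin m))
      have hb1 : (1 : ℝ) ≤ (nb (e a : Fin m) : ℝ) := by exact_mod_cast Nat.one_le_cast.mpr (by omega)
      have hρa : (ρ (a : Fin m) : ℝ) = (nb (a : Fin m) : ℝ) + 1 := by
        rw [haA]; push_cast; ring
      have hρb : (ρ ((e a : Fin m)) : ℝ) = (nb ((e a : Fin m)) : ℝ) - 1 := by
        have : (nb ((e a : Fin m)) : ℝ) = (ρ ((e a : Fin m)) : ℝ) + 1 := by
          rw [hbB]; push_cast; ring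
        linarith
      have hn : ((nb (a : Fin m) : ℝ) + 1) * d a ≤ (nb ((e a : Fin m)) : ℝ) * d (e a) := by
        rw [hρa, hρb] at hnash; linarith
      have := pair_bound (d a) (d (e a)) (nb (a : Fin m) : ℝ) (nb ((e a : Fin m)) : ℝ)
        hx hy (by positivity) hb1 hn
      simp only [ht, hs', hρa, hρb]
      linarith
    calc ∑ ℓ ∈ A, t ℓ + ∑ ℓ ∈ B, t ℓ
        = ∑ a : A, (t a + t (e a)) := by
          rw [hAsum t, hBsum t, Finset.sum_add_distrib]
      _ ≤ ∑ a : A, (s a + s (e a)) := Finset.sum_le_sum (fun a _ => hpair a)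
      _ = ∑ ℓ ∈ A, s ℓ + ∑ ℓ ∈ B, s ℓ := by
          rw [hAsum s, hBsum s, Finset.sum_add_distrib]
      _ = ∑ ℓ ∈ A ∪ B, s ℓ := (Finset.sum_union hdisj).symm
      _ ≤ ∑ ℓ, s ℓ := by
          refine Finset.sum_le_sum_of_subset_of_nonneg hsub ?_
          intro ℓ _ _
          have := (hd ℓ).le
          simp only [hs']
          positivity
  have hct : cCost d ρ - cCost d nb = ∑ ℓ, t ℓ := by
    simp only [cCost, ht, Finset.sum_sub_distrib]
  have hcs : ∑ ℓ, s ℓ = (1 / 3) * cCost d nb := by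
    simp only [cCost, hs', Finset.mul_sum]
  linarith [key, hct.symm, hcs]
end

section
/- (Key pairwise step in the 4/3 bound.) Let d_ℓ, d_ℓ' > 0 and nonnegative integers n_ℓ ≥ 1, n_ℓ' with n_ℓ d_ℓ = (n_ℓ'+1) d_ℓ'. Then (n_ℓ − 1)² d_ℓ + (n_ℓ' + 1)² d_ℓ' ≤ (4/3)·(n_ℓ² d_ℓ + n_ℓ'² d_ℓ'). -/
/-- Key pairwise step in the 4/3 bound: if `n_ℓ d_ℓ = (n_ℓ' + 1) d_ℓ'` with
`n_ℓ ≥ 1`, then `(n_ℓ − 1)² d_ℓ + (n_ℓ' + 1)² d_ℓ' ≤ (4/3)(n_ℓ² d_ℓ + n_ℓ'² d_ℓ')`. -/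
theorem pairwise_four_thirds
    (d₁ d₂ : ℝ) (hd₁ : 0 < d₁) (hd₂ : 0 < d₂)
    (a b : ℕ) (ha : 1 ≤ a)
    (hbal : (a : ℝ) * d₁ = ((b : ℝ) + 1) * d₂) :
    ((a : ℝ) - 1) ^ 2 * d₁ + ((b : ℝ) + 1) ^ 2 * d₂ ≤
      (4 / 3) * ((a : ℝ) ^ 2 * d₁ + (b : ℝ) ^ 2 * d₂) := by
  have hA : (1 : ℝ) ≤ (a : ℝ) := by exact_mod_cast ha
  have hB : (0 : ℝ) ≤ (b : ℝ) := Nat.cast_nonneg b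
  have hB1 : (0 : ℝ) < (b : ℝ) + 1 := by linarith
  have hd2 : d₂ = (a : ℝ) * d₁ / ((b : ℝ) + 1) := by
    field_simp
    linarith [hbal]
  subst hd2
  rw [← sub_nonneg]
  have key : 4 / 3 * ((a:ℝ) ^ 2 * d₁ + (b:ℝ) ^ 2 * ((a:ℝ) * d₁ / ((b:ℝ) + 1))) -
      (((a:ℝ) - 1) ^ 2 * d₁ + ((b:ℝ) + 1) ^ 2 * ((a:ℝ) * d₁ / ((b:ℝ) + 1))) =
      (((a:ℝ)^2*(b:ℝ) + (a:ℝ)^2 + (a:ℝ)*(b:ℝ)^2 + 3*(a:ℝ) - 3*(b:ℝ) - 3) * d₁) / (3 * ((b:ℝ)+1)) := by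
    field_simp
    ring
  rw [key]
  have hnum : (0:ℝ) ≤ ((a:ℝ)^2*(b:ℝ) + (a:ℝ)^2 + (a:ℝ)*(b:ℝ)^2 + 3*(a:ℝ) - 3*(b:ℝ) - 3) := by
    nlinarith [sq_nonneg ((b:ℝ) - 1), mul_nonneg (sub_nonneg.2 hA) hB,
      mul_nonneg (mul_nonneg (sub_nonneg.2 hA) hB) hB,
      mul_nonneg (mul_nonneg (sub_nonneg.2 hA) (sub_nonneg.2 hA)) hB]
  positivity
end

section
/- There exists an optimal (minimum-cost) assignment of tasks to resources in which the resources can be linearly ordered so that if resource i precedes resource j, then every task assigned to i has weight at most the weight of every task assigned to j. -/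
/-!
With `c ℓ = d ℓ * #(A⁻¹ ℓ)` the cost of `A` is `∑ t, c (A t) * w t`, and exchanging two tasks
between their resources leaves every `c ℓ` unchanged, so it changes the cost by
`(c (A t) - c (A t')) * (w t' - w t)`. Take an optimal assignment which, among optimal ones,
minimises the potential `∑ t, A t * w t`, and order the resources by decreasing `c`, ties broken
by decreasing index. A heavier task on an earlier resource could then be exchanged with a lighter
one on a later resource, lowering either the cost or, at equal cost, the potential.
-/

open Finset

/-- Social cost: each task pays the load of its resource. -/
noncomputable def wCost {n m : ℕ} (d : Fin m → ℝ) (w : Fin n → ℝ)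
    (A : Fin n → Fin m) : ℝ :=
  ∑ i : Fin n, d (A i) * ∑ j ∈ univ.filter (fun j => A j = A i), w j

open Equiv

theorem sum_comp_swap_mul_sub_sum_mul {α R : Type*} [Fintype α] [DecidableEq α] [CommRing R]
    (f w : α → R) (t t' : α) :
    ∑ s, f (swap t t' s) * w s - ∑ s, f s * w s = (f t - f t') * (w t' - w t) := by
  rw [← Equiv.sum_comp (swap t t') fun s => f (swap t t' s) * w s]
  simp only [swap_apply_self, ← sum_sub_distrib, ← mul_sub]
  rcases eq_or_ne t t' with rfl | htt'
  · simp
  rw [Fintype.sum_eq_add t t' htt' fun s hs => by rw [swap_apply_of_ne_of_ne hs.1 hs.2, sub_self,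
    mul_zero], swap_apply_left, swap_apply_right]
  ring

theorem exists_min_lex {α β γ : Type*} [Finite α] [Nonempty α] [LinearOrder β] [LinearOrder γ]
    (f : α → β) (g : α → γ) : ∃ a, (∀ b, f a ≤ f b) ∧ ∀ b, f b = f a → g a ≤ g b := by
  obtain ⟨a, ha⟩ := Finite.exists_min fun a => toLex (f a, g a)
  refine ⟨a, fun b => ?_, fun b hb => ?_⟩
  · rcases Prod.Lex.toLex_le_toLex.1 (ha b) with h | ⟨h, -⟩
    exacts [h.le, h.le]
  · rcases Prod.Lex.toLex_le_toLex.1 (ha b) with h | ⟨-, h⟩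
    exacts [absurd hb h.ne', h]

theorem Tuple.exists_perm_lt_of_lt {β : Type*} [LinearOrder β] {m : ℕ} {f : Fin m → β}
    (hf : Function.Injective f) : ∃ π : Perm (Fin m), ∀ i j, π i < π j → f i < f j := by
  refine ⟨(sort f).symm, fun i j hij => ?_⟩
  have hle : f i ≤ f j := by simpa using monotone_sort f hij.le
  exact hle.lt_of_ne (hf.ne fun h => hij.ne (h ▸ rfl))

section Assignment

variable {n m : ℕ} (d : Fin m → ℝ) (w : Fin n → ℝ) (A : Fin n → Fin m)

noncomputable def costCoeff (ℓ : Fin m) : ℝ :=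
  d ℓ * #{s | A s = ℓ}

noncomputable def indexPotential : ℝ :=
  ∑ s, ((A s : ℕ) : ℝ) * w s

theorem costCoeff_comp_perm (σ : Perm (Fin n)) : costCoeff d (A ∘ σ) = costCoeff d A := by
  ext ℓ
  simp only [costCoeff, card_filter, Function.comp_apply]
  rw [Equiv.sum_comp σ fun s => if A s = ℓ then 1 else 0]

theorem wCost_eq_sum_costCoeff_mul : wCost d w A = ∑ s, costCoeff d A (A s) * w s := by
  unfold wCost costCoeff
  simp_rw [mul_sum, sum_filter]
  rw [sum_comm]
  refine sum_congr rfl fun s _ => ?_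
  rw [← sum_filter, sum_congr rfl fun x hx => by rw [← (mem_filter.1 hx).2], sum_const,
    nsmul_eq_mul]
  simp only [eq_comm (a := A s)]
  ring

theorem wCost_comp_swap_sub (t t' : Fin n) :
    wCost d w (A ∘ swap t t') - wCost d w A
      = (costCoeff d A (A t) - costCoeff d A (A t')) * (w t' - w t) := by
  rw [wCost_eq_sum_costCoeff_mul, wCost_eq_sum_costCoeff_mul, costCoeff_comp_perm]
  exact sum_comp_swap_mul_sub_sum_mul (fun s => costCoeff d A (A s)) w t t'

theorem indexPotential_comp_swap_sub (t t' : Fin n) :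
    indexPotential w (A ∘ swap t t') - indexPotential w A
      = (((A t : ℕ) : ℝ) - (A t' : ℕ)) * (w t' - w t) :=
  sum_comp_swap_mul_sub_sum_mul (fun s => ((A s : ℕ) : ℝ)) w t t'

variable {d w A}

theorem weight_le_of_toLex_costCoeff_lt (hcost : ∀ B, wCost d w A ≤ wCost d w B)
    (hpot : ∀ B, wCost d w B = wCost d w A → indexPotential w A ≤ indexPotential w B)
    {t t' : Fin n} (h : toLex (costCoeff d A (A t'), A t') < toLex (costCoeff d A (A t), A t)) :
    w t ≤ w t' := by
  by_contra! hlt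
  have hcost_swap := wCost_comp_swap_sub d w A t t'
  rcases Prod.Lex.toLex_lt_toLex.1 h with hc | ⟨hc, hidx⟩
  · nlinarith [hcost (A ∘ swap t t')]
  · dsimp only at hc hidx
    rw [hc, sub_self, zero_mul, sub_eq_zero] at hcost_swap
    have hidx : ((A t' : ℕ) : ℝ) < (A t : ℕ) := by exact_mod_cast hidx
    nlinarith [hpot _ hcost_swap, indexPotential_comp_swap_sub w A t t']

end Assignment

theorem exists_ordered_optimal_assignment_general
    (n m : ℕ) (hm : 0 < m) (d : Fin m → ℝ)
    (w : Fin n → ℝ) :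
    ∃ A : Fin n → Fin m,
      (∀ B : Fin n → Fin m, wCost d w A ≤ wCost d w B) ∧
      ∃ π : Equiv.Perm (Fin m),
        ∀ (i j : Fin m), π i < π j →
          ∀ (t t' : Fin n), A t = i → A t' = j → w t ≤ w t' := by
  have : Nonempty (Fin n → Fin m) := ⟨fun _ => ⟨0, hm⟩⟩
  obtain ⟨A, hcost, hpot⟩ := exists_min_lex (wCost d w) (indexPotential w)
  have hkey : Function.Injective fun ℓ => OrderDual.toDual (toLex (costCoeff d A ℓ, ℓ)) :=
    fun _ _ h => (Prod.ext_iff.1 (toLex.injective (OrderDual.toDual.injective h))).2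
  obtain ⟨π, hπ⟩ := Tuple.exists_perm_lt_of_lt hkey
  refine ⟨A, hcost, π, ?_⟩
  rintro _ _ hij t t' rfl rfl
  exact weight_le_of_toLex_costCoeff_lt hcost hpot (hπ _ _ hij)

/-- There exists an optimal assignment in which the resources can be linearly
ordered so that earlier resources only receive tasks of weight at most those of
later resources. -/
theorem exists_ordered_optimal_assignment
    (n m : ℕ) (hm : 0 < m) (d : Fin m → ℝ) (hd : ∀ ℓ, 0 < d ℓ)
    (w : Fin n → ℝ) (hw : ∀ i, 0 < w i) :
    ∃ A : Fin n → Fin m,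
      (∀ B : Fin n → Fin m, wCost d w A ≤ wCost d w B) ∧
      ∃ π : Equiv.Perm (Fin m),
        ∀ (i j : Fin m), π i < π j →
          ∀ (t t' : Fin n), A t = i → A t' = j → w t ≤ w t' :=
  exists_ordered_optimal_assignment_general n m hm d w
end

section
/- (Exchange argument.) Suppose in an assignment A, resources i and j have n_i and n_j tasks respectively, tasks of weights w and w' are on resource i, a task of weight w'' is on resource j, and w < w'' < w'. If n_i d_i > n_j d_j, then swapping the tasks of weights w'' and w' strictly decreases the social cost; if n_i d_i < n_j d_j, swapping the tasks of weights w and w'' strictly decreases the social cost; if n_i d_i = n_j d_j, both swaps leave the social cost unchanged. -/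
/-- Exchange argument: with `n_i` tasks on resource `i` (delay `d_i`, total weight
`W_i`) and similarly for `j`, tasks of weights `w < w'' < w'` with `w, w'` on `i`
and `w''` on `j`: if `n_i d_i > n_j d_j` then swapping `w''` and `w'` strictly
decreases the cost; if `n_i d_i < n_j d_j` then swapping `w` and `w''` strictly
decreases the cost; if equal, both swaps leave the cost unchanged. (`R` is the cost
contribution of the other resources.) -/
theorem exchange_argument
    (ni nj : ℕ) (di dj : ℝ) (hdi : 0 < di) (hdj : 0 < dj)
    (Wi Wj R w w'' w' : ℝ) (h1 : w < w'') (h2 : w'' < w') :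
    ((nj : ℝ) * dj < (ni : ℝ) * di →
      (ni : ℝ) * di * (Wi + w'' - w') + (nj : ℝ) * dj * (Wj + w' - w'') + R <
        (ni : ℝ) * di * Wi + (nj : ℝ) * dj * Wj + R) ∧
    ((ni : ℝ) * di < (nj : ℝ) * dj →
      (ni : ℝ) * di * (Wi + w'' - w) + (nj : ℝ) * dj * (Wj + w - w'') + R <
        (ni : ℝ) * di * Wi + (nj : ℝ) * dj * Wj + R) ∧
    ((ni : ℝ) * di = (nj : ℝ) * dj →
      ((ni : ℝ) * di * (Wi + w'' - w') + (nj : ℝ) * dj * (Wj + w' - w'') + R =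
        (ni : ℝ) * di * Wi + (nj : ℝ) * dj * Wj + R) ∧
      ((ni : ℝ) * di * (Wi + w'' - w) + (nj : ℝ) * dj * (Wj + w - w'') + R =
        (ni : ℝ) * di * Wi + (nj : ℝ) * dj * Wj + R)) := by
  refine ⟨fun h => ?_, fun h => ?_, fun h => ⟨by rw [h]; ring, by rw [h]; ring⟩⟩
  · nlinarith
  · nlinarith
end
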